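/- The commutator norm controls the first-order order-swap difference: for matrices A, B, ‖exp(A)exp(B) − exp(B)exp(A)‖ ≤ ‖[A,B]‖ · e^{‖A‖+‖B‖}. -/

import Mathlib

/-!
Moving `X` across `Y ^ (n + 1)` one factor at a time costs at most `(n + 1) ‖Y‖ ^ n ‖XY - YX‖`;
the factor `n + 1` cancels against `(n + 1)!`, so summing the exponential series gives
`‖X exp Y - exp Y X‖ ≤ e^‖Y‖ ‖XY - YX‖`. Applied to `X = exp B, Y = A` and then to `X = A, Y = B`,
this yields the bound.
-/

open NormedSpace
open scoped Nat

theorem norm_mul_pow_succ_sub_pow_succ_mul_le {R : Type*} [SeminormedRing R] (X Y : R) (n : ℕ) :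
    ‖X * Y ^ (n + 1) - Y ^ (n + 1) * X‖ ≤ (n + 1) * ‖Y‖ ^ n * ‖X * Y - Y * X‖ := by
  induction n with
  | zero => simp
  | succ n ih =>
    have split : X * Y ^ (n + 2) - Y ^ (n + 2) * X
        = (X * Y ^ (n + 1) - Y ^ (n + 1) * X) * Y + Y ^ (n + 1) * (X * Y - Y * X) := by
      rw [pow_succ Y (n + 1)]; noncomm_ring
    calc ‖X * Y ^ (n + 2) - Y ^ (n + 2) * X‖
        ≤ ‖X * Y ^ (n + 1) - Y ^ (n + 1) * X‖ * ‖Y‖ + ‖Y ^ (n + 1)‖ * ‖X * Y - Y * X‖ := by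
          rw [split]
          exact (norm_add_le _ _).trans (add_le_add (norm_mul_le _ _) (norm_mul_le _ _))
      _ ≤ (n + 1) * ‖Y‖ ^ n * ‖X * Y - Y * X‖ * ‖Y‖ + ‖Y‖ ^ (n + 1) * ‖X * Y - Y * X‖ := by
          gcongr
          exact norm_pow_le' Y n.succ_pos
      _ = (↑(n + 1) + 1) * ‖Y‖ ^ (n + 1) * ‖X * Y - Y * X‖ := by
          push_cast; ring

section BanachAlgebra

variable {𝔸 : Type*} [NormedRing 𝔸] [NormedAlgebra ℝ 𝔸] [CompleteSpace 𝔸]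

-- The `n = 0` term `X * 1 - 1 * X` vanishes, hence the shift of index.
theorem hasSum_mul_exp_sub_exp_mul (X Y : 𝔸) :
    HasSum (fun n : ℕ => ((n + 1)! : ℝ)⁻¹ • (X * Y ^ (n + 1) - Y ^ (n + 1) * X))
      (X * exp Y - exp Y * X) := by
  have h := ((exp_series_hasSum_exp' (𝕂 := ℝ) Y).mul_left X).sub
    ((exp_series_hasSum_exp' (𝕂 := ℝ) Y).mul_right X)
  rw [← hasSum_nat_add_iff' 1] at h
  simpa [mul_smul_comm, smul_mul_assoc, smul_sub] using h

theorem norm_mul_exp_sub_exp_mul_le (X Y : 𝔸) :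
    ‖X * exp Y - exp Y * X‖ ≤ Real.exp ‖Y‖ * ‖X * Y - Y * X‖ := by
  have hasSum_bound : HasSum (fun n : ℕ => ‖Y‖ ^ n / n ! * ‖X * Y - Y * X‖)
      (Real.exp ‖Y‖ * ‖X * Y - Y * X‖) :=
    Real.exp_eq_exp_ℝ ▸ (expSeries_div_hasSum_exp ‖Y‖).mul_right _
  refine (hasSum_mul_exp_sub_exp_mul X Y).norm_le_of_bounded hasSum_bound fun n => ?_
  calc ‖((n + 1)! : ℝ)⁻¹ • (X * Y ^ (n + 1) - Y ^ (n + 1) * X)‖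
      ≤ ((n + 1)! : ℝ)⁻¹ * ((n + 1) * ‖Y‖ ^ n * ‖X * Y - Y * X‖) := by
        rw [norm_smul, Real.norm_of_nonneg (by positivity)]
        gcongr
        exact norm_mul_pow_succ_sub_pow_succ_mul_le X Y n
    _ = ‖Y‖ ^ n / n ! * ‖X * Y - Y * X‖ := by
        rw [Nat.factorial_succ]; push_cast; field_simp

end BanachAlgebra

/-- The commutator norm controls the order-swap difference:
`‖exp A * exp B - exp B * exp A‖ ≤ ‖A * B - B * A‖ * e^(‖A‖ + ‖B‖)`. -/
theorem order_swap_bound_by_commutator {𝔸 : Type*} [NormedRing 𝔸]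
    [NormedAlgebra ℝ 𝔸] [CompleteSpace 𝔸] (A B : 𝔸) :
    ‖exp A * exp B - exp B * exp A‖ ≤
      ‖A * B - B * A‖ * Real.exp (‖A‖ + ‖B‖) := by
  calc ‖exp A * exp B - exp B * exp A‖
      = ‖exp B * exp A - exp A * exp B‖ := norm_sub_rev _ _
    _ ≤ Real.exp ‖A‖ * ‖exp B * A - A * exp B‖ := norm_mul_exp_sub_exp_mul_le (exp B) A
    _ = Real.exp ‖A‖ * ‖A * exp B - exp B * A‖ := by rw [norm_sub_rev]
    _ ≤ Real.exp ‖A‖ * (Real.exp ‖B‖ * ‖A * B - B * A‖) := by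
        gcongr; exact norm_mul_exp_sub_exp_mul_le A B
    _ = ‖A * B - B * A‖ * Real.exp (‖A‖ + ‖B‖) := by rw [Real.exp_add]; ring
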